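/- arXiv:1209.5535 — 5 statements merged into one kernel-verified Lean document; each statement's English description precedes it below -/
import Mathlib

section
/- Let n ≥ 2 and let f : ℝ₊ → ℝ be twice continuously differentiable. Then the function C ↦ f(det C), defined on the set PSym(n) of real symmetric positive definite n×n matrices, is convex if and only if for all s > 0 both f''(s) + ((n-1)/(n·s))·f'(s) ≥ 0 and f'(s) ≤ 0 hold. -/
/-!
Along a segment of positive definite matrices the determinant factors as
`det (x • C₁ + y • C₂) = ∏ i, (x * α i + y * β i)` with all `α i, β i > 0` (diagonalise
`C₁^(-1/2) C₂ C₁^(-1/2)`), so `f ∘ det` is convex on positive definite matrices iff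
`x ↦ f (∏ i, x i)` is convex on the positive orthant. There `f (∏ i, x i) = φ (G x)`, where
`φ r = f (r ^ n)` and `G` is the geometric mean, which is concave and maps the orthant onto
`(0, ∞)`; hence convexity of `φ` and monotonicity of `f` suffice. Conversely, restricting to
the diagonal gives the convexity of `φ`, and the segment from `(s(1+t), 1-t, 1, …)` to
`(s(1-t), 1+t, 1, …)`, with product `s (1 - t²)` at both ends and `s` at the midpoint, gives
`f s ≤ f (s (1 - t²))`. Finally `φ'' r = (n r ^ (n-1))² (f'' s + (n-1)/(n s) f' s)` at
`s = r ^ n`.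
-/

open Matrix Set

theorem ConvexOn.nonneg_of_hasDerivAt2 {S : Set ℝ} {f f' : ℝ → ℝ} {f'' x : ℝ}
    (hS : IsOpen S) (hf : ConvexOn ℝ S f) (hf' : ∀ y ∈ S, HasDerivAt f (f' y) y)
    (hx : x ∈ S) (hf'' : HasDerivAt f' f'' x) : 0 ≤ f'' := by
  have hmono : MonotoneOn f' S := fun a ha b hb hab => by
    simpa only [(hf' a ha).deriv, (hf' b hb).deriv] using
      hf.monotoneOn_deriv (fun y hy => (hf' y hy).differentiableAt) ha hb hab
  simpa only [derivWithin_of_isOpen hS hx, hf''.deriv] using hmono.derivWithin_nonneg (x := x)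

theorem antitoneOn_Ioi_iff_deriv_nonpos {f : ℝ → ℝ} {a : ℝ}
    (hf : DifferentiableOn ℝ f (Ioi a)) :
    AntitoneOn f (Ioi a) ↔ ∀ s, a < s → deriv f s ≤ 0 := by
  refine ⟨fun hanti s hs => ?_, fun hderiv => ?_⟩
  · simpa only [derivWithin_of_isOpen isOpen_Ioi (mem_Ioi.2 hs)] using
      hanti.derivWithin_nonpos (x := s)
  · exact antitoneOn_of_deriv_nonpos (convex_Ioi a) hf.continuousOn
      (by rwa [interior_Ioi]) (by simpa only [interior_Ioi, Set.mem_Ioi] using hderiv)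

theorem ContDiffOn.hasDerivAt_and_hasDerivAt_deriv {f : ℝ → ℝ} {S : Set ℝ} {x : ℝ}
    (hf : ContDiffOn ℝ 2 f S) (hS : IsOpen S) (hx : x ∈ S) :
    HasDerivAt f (deriv f x) x ∧ HasDerivAt (deriv f) (deriv (deriv f) x) x := by
  have hf' : ContDiffOn ℝ 1 (deriv f) S := hf.deriv_of_isOpen hS (by norm_num)
  exact ⟨(hf.differentiableOn two_ne_zero x hx).differentiableAt (hS.mem_nhds hx) |>.hasDerivAt,
    (hf'.differentiableOn one_ne_zero x hx).differentiableAt (hS.mem_nhds hx) |>.hasDerivAt⟩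

theorem convexOn_comp_pow_iff {f : ℝ → ℝ} {N : ℕ} (hN : N ≠ 0)
    (hf : ContDiffOn ℝ 2 f (Ioi 0)) :
    ConvexOn ℝ (Ioi 0) (fun r => f (r ^ N)) ↔
      ∀ s, 0 < s → 0 ≤ deriv (deriv f) s + ((N : ℝ) - 1) / (N * s) * deriv f s := by
  set L := fun s => deriv (deriv f) s + ((N : ℝ) - 1) / (N * s) * deriv f s
  have hf_deriv := fun r (hr : 0 < r) =>
    hf.hasDerivAt_and_hasDerivAt_deriv isOpen_Ioi (mem_Ioi.2 (pow_pos hr N))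
  have hφ : ∀ r ∈ Ioi (0 : ℝ),
      HasDerivAt (fun r => f (r ^ N)) (N * r ^ (N - 1) * deriv f (r ^ N)) r := fun r hr =>
    ((hf_deriv r hr).1.comp r (hasDerivAt_pow N r)).congr_deriv (mul_comm _ _)
  have hφ' : ∀ r ∈ Ioi (0 : ℝ), HasDerivAt (fun r => N * r ^ (N - 1) * deriv f (r ^ N))
      ((N * r ^ (N - 1)) ^ 2 * L (r ^ N)) r := fun r (hr : 0 < r) => by
    have hf' : HasDerivAt (fun y => deriv f (y ^ N))
        (deriv (deriv f) (r ^ N) * (N * r ^ (N - 1))) r :=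
      (hf_deriv r hr).2.comp r (hasDerivAt_pow N r)
    refine (((hasDerivAt_pow (N - 1) r).const_mul (N : ℝ)).mul hf').congr_deriv ?_
    obtain ⟨m, rfl⟩ := Nat.exists_eq_add_one_of_ne_zero hN
    have : r ≠ 0 := hr.ne'
    rcases m with _ | k
    · simp [L]
    · simp only [L, Nat.add_sub_cancel, Nat.cast_add, Nat.cast_one]
      field_simp
      ring
  constructor
  · intro hconv s hs
    have hr : 0 < s ^ (N : ℝ)⁻¹ := Real.rpow_pos_of_pos hs _
    have h := hconv.nonneg_of_hasDerivAt2 isOpen_Ioi hφ hr (hφ' _ hr)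
    rw [Real.rpow_inv_natCast_pow hs.le hN] at h
    exact nonneg_of_mul_nonneg_right h (by positivity)
  · intro hL
    refine convexOn_of_hasDerivWithinAt2_nonneg (convex_Ioi 0)
      (f' := fun r => N * r ^ (N - 1) * deriv f (r ^ N))
      (f'' := fun r => (N * r ^ (N - 1)) ^ 2 * L (r ^ N)) ?_ ?_ ?_ ?_
    · exact fun r hr => (hφ r hr).continuousAt.continuousWithinAt
    · simpa only [interior_Ioi] using fun r hr => (hφ r hr).hasDerivWithinAt
    · simpa only [interior_Ioi] using fun r hr => (hφ' r hr).hasDerivWithinAt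
    · simp only [interior_Ioi]
      exact fun r hr => mul_nonneg (sq_nonneg _) (hL _ (pow_pos hr N))

theorem convex_setOf_forall_pos {ι : Type*} : Convex ℝ {x : ι → ℝ | ∀ i, 0 < x i} := by
  simpa [Set.pi] using convex_pi (s := univ) fun (_ : ι) _ => convex_Ioi (0 : ℝ)

theorem Matrix.convex_setOf_posDef {ι : Type*} :
    Convex ℝ {C : Matrix ι ι ℝ | C.PosDef} := by
  intro C₁ h₁ C₂ h₂ a b ha hb hab
  rcases ha.eq_or_lt with rfl | ha
  · simpa [show b = 1 by linarith] using h₂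
  · exact (h₁.smul ha).add_posSemidef (h₂.posSemidef.smul hb)

section

variable {ι : Type*} [Fintype ι]

theorem concaveOn_prod_rpow {w : ι → ℝ} (hw : ∀ i, 0 ≤ w i) (hw₁ : ∑ i, w i = 1) :
    ConcaveOn ℝ {x : ι → ℝ | ∀ i, 0 < x i} (fun x => ∏ i, x i ^ w i) := by
  refine ⟨convex_setOf_forall_pos, fun x hx y hy a b ha hb hab => ?_⟩
  -- weighted AM-GM applied to `x / z` and `y / z`
  set z := a • x + b • y
  have hz : ∀ i, 0 < z i := convex_setOf_forall_pos hx hy ha hb hab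
  have amgm : ∀ u : ι → ℝ, (∀ i, 0 < u i) →
      ∏ i, u i ^ w i ≤ (∏ i, z i ^ w i) * ∑ i, w i * (u i / z i) := fun u hu => by
    have : ∏ i, u i ^ w i = (∏ i, z i ^ w i) * ∏ i, (u i / z i) ^ w i := by
      rw [← Finset.prod_mul_distrib]
      refine Finset.prod_congr rfl fun i _ => ?_
      rw [Real.div_rpow (hu i).le (hz i).le,
        mul_div_cancel₀ _ (Real.rpow_pos_of_pos (hz i) _).ne']
    rw [this]
    exact mul_le_mul_of_nonneg_left (Real.geom_mean_le_arith_mean_weighted Finset.univ _ _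
      (fun i _ => hw i) hw₁ fun i _ => div_nonneg (hu i).le (hz i).le)
      (Finset.prod_nonneg fun i _ => (Real.rpow_pos_of_pos (hz i) _).le)
  calc a • ∏ i, x i ^ w i + b • ∏ i, y i ^ w i
      ≤ a * ((∏ i, z i ^ w i) * ∑ i, w i * (x i / z i))
        + b * ((∏ i, z i ^ w i) * ∑ i, w i * (y i / z i)) := by
        simp only [smul_eq_mul]
        gcongr
        exacts [amgm x hx, amgm y hy]
    _ = (∏ i, z i ^ w i) * ∑ i, w i * ((a * x i + b * y i) / z i) := by
        simp only [Finset.mul_sum, ← Finset.sum_add_distrib]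
        refine Finset.sum_congr rfl fun i _ => ?_
        ring
    _ = ∏ i, z i ^ w i := by
        have hzi : ∀ i, (a * x i + b * y i) / z i = 1 := fun i => div_self (hz i).ne'
        simp only [hzi, mul_one, hw₁]

theorem image_prod_rpow_inv_card [Nonempty ι] :
    (fun x : ι → ℝ => ∏ i, x i ^ (Fintype.card ι : ℝ)⁻¹) '' {x | ∀ i, 0 < x i} = Ioi 0 := by
  refine Subset.antisymm ?_ fun r (hr : 0 < r) => ⟨fun _ => r, fun _ => hr, ?_⟩
  · rintro _ ⟨x, hx, rfl⟩
    exact Finset.prod_pos fun i _ => Real.rpow_pos_of_pos (hx i) _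
  · simp only [Finset.prod_const, Finset.card_univ]
    exact Real.rpow_inv_natCast_pow hr.le Fintype.card_ne_zero

theorem ConvexOn.comp_prod_of_antitoneOn [Nonempty ι] {f : ℝ → ℝ}
    (hφ : ConvexOn ℝ (Ioi 0) fun r => f (r ^ Fintype.card ι)) (hf : AntitoneOn f (Ioi 0)) :
    ConvexOn ℝ {x : ι → ℝ | ∀ i, 0 < x i} fun x => f (∏ i, x i) := by
  have hN : Fintype.card ι ≠ 0 := Fintype.card_ne_zero
  have hG := concaveOn_prod_rpow (ι := ι) (w := fun _ => (Fintype.card ι : ℝ)⁻¹)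
    (fun _ => by positivity) (by simp [hN])
  have hφ_anti : AntitoneOn (fun r => f (r ^ Fintype.card ι)) (Ioi 0) :=
    fun r (hr : 0 < r) s (hs : 0 < s) hrs =>
      hf (pow_pos hr _) (pow_pos hs _) (pow_le_pow_left₀ hr.le hrs _)
  rw [← image_prod_rpow_inv_card (ι := ι)] at hφ hφ_anti
  refine (hφ.comp_concaveOn hG hφ_anti).congr fun x hx => ?_
  simp only [Function.comp_apply, ← Finset.prod_pow]
  exact congrArg f <| Finset.prod_congr rfl fun i _ =>
    Real.rpow_inv_natCast_pow (hx i).le hN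

theorem ConvexOn.comp_pow_card_of_comp_prod {f : ℝ → ℝ}
    (hF : ConvexOn ℝ {x : ι → ℝ | ∀ i, 0 < x i} fun x => f (∏ i, x i)) :
    ConvexOn ℝ (Ioi 0) fun r => f (r ^ Fintype.card ι) := by
  refine ((hF.comp_linearMap (LinearMap.pi fun _ => LinearMap.id)).subset
    (fun r hr _ => hr) (convex_Ioi 0)).congr fun r _ => ?_
  simp

variable [DecidableEq ι]

theorem antitoneOn_of_convexOn_comp_prod {f : ℝ → ℝ} {i j : ι} (hij : i ≠ j)
    (hF : ConvexOn ℝ {x : ι → ℝ | ∀ i, 0 < x i} fun x => f (∏ i, x i)) :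
    AntitoneOn f (Ioi 0) := by
  intro u (hu : 0 < u) s (hs : 0 < s) hus
  set t := √(1 - u / s)
  have ht₀ : 0 ≤ t := Real.sqrt_nonneg _
  have ht_sq : t ^ 2 = 1 - u / s := Real.sq_sqrt (by rw [sub_nonneg, div_le_one hs]; exact hus)
  have ht₁ : t < 1 := by nlinarith [div_pos hu hs]
  set v : ℝ → ι → ℝ := fun c k => if k = i then s * (1 + c) else if k = j then 1 - c else 1
  have hprod : ∀ c, ∏ k, v c k = s * (1 + c) * (1 - c) := fun c => by
    simp [v, Finset.prod_ite, Finset.filter_eq', Finset.filter_ne', hij.symm]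
  have hpos : ∀ c, |c| < 1 → ∀ k, 0 < v c k := fun c hc k => by
    rw [abs_lt] at hc
    simp only [v]
    split_ifs <;> nlinarith
  have hmid : (1 / 2 : ℝ) • v t + (1 / 2 : ℝ) • v (-t) = v 0 := by
    ext k
    simp only [v, Pi.add_apply, Pi.smul_apply, smul_eq_mul]
    split_ifs <;> ring
  have h := hF.2 (hpos t (by rwa [abs_of_nonneg ht₀]))
    (hpos (-t) (by rwa [abs_neg, abs_of_nonneg ht₀]))
    (by norm_num : (0 : ℝ) ≤ 1 / 2) (by norm_num : (0 : ℝ) ≤ 1 / 2) (by norm_num)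
  have hend : s * (1 + t) * (1 - t) = u := by
    field_simp at ht_sq
    linear_combination -ht_sq
  have hend' : s * (1 + -t) * (1 - -t) = u := by rw [← hend]; ring
  simp only [hmid, hprod, smul_eq_mul, add_zero, sub_zero, mul_one, hend, hend'] at h
  linarith

theorem Matrix.IsHermitian.det_smul_one_add_smul {A : Matrix ι ι ℝ} (hA : A.IsHermitian)
    (x y : ℝ) :
    (x • 1 + y • A).det = ∏ i, (x + y * hA.eigenvalues i) := by
  set U := hA.eigenvectorUnitary
  have hconj : x • 1 + y • A = Unitary.conjStarAlgAut ℝ _ U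
      (diagonal fun i => x + y * hA.eigenvalues i) := by
    conv_lhs => rw [hA.spectral_theorem]
    rw [← map_one (Unitary.conjStarAlgAut ℝ _ U), ← map_smul, ← map_smul, ← map_add]
    congr 1
    ext i j
    by_cases hij : i = j <;> simp [hij]
  rw [hconj, Unitary.conjStarAlgAut_apply, det_mul, det_mul, mul_right_comm, ← det_mul,
    Unitary.mul_star_self_of_mem U.2, det_one, one_mul, det_diagonal]

theorem Matrix.PosDef.exists_det_smul_add_smul_eq_prod {C₁ C₂ : Matrix ι ι ℝ} (h₁ : C₁.PosDef)
    (h₂ : C₂.PosDef) :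
    ∃ α β : ι → ℝ, (∀ i, 0 < α i) ∧ (∀ i, 0 < β i) ∧
      ∀ x y : ℝ, (x • C₁ + y • C₂).det = ∏ i, (x * α i + y * β i) := by
  open scoped MatrixOrder in
  obtain ⟨R, hRH, hR⟩ : ∃ R : Matrix ι ι ℝ, R.IsHermitian ∧ R * R = C₁ :=
    ⟨CFC.sqrt C₁, (CFC.sqrt_nonneg C₁).posSemidef.isHermitian,
      CFC.sqrt_mul_sqrt_self C₁ h₁.posSemidef.nonneg⟩
  have hRdet : R.det * R.det = C₁.det := by rw [← det_mul, hR]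
  have hRunit : IsUnit R.det := isUnit_iff_ne_zero.2 fun h => by
    simpa [← hRdet, h] using h₁.det_pos
  set A := R⁻¹ * C₂ * R⁻¹
  have hA : A.PosDef := by
    have := h₂.conjTranspose_mul_mul_same (B := R⁻¹)
      (mulVec_injective_iff_isUnit.2 <|
        (isUnit_iff_isUnit_det _).2 (isUnit_nonsing_inv_det R hRunit))
    rwa [conjTranspose_nonsing_inv, hRH.eq] at this
  have hsplit : ∀ x y : ℝ, x • C₁ + y • C₂ = R * (x • 1 + y • A) * R := fun x y => by
    simp only [A, Matrix.mul_add, Matrix.add_mul, Matrix.mul_smul, Matrix.smul_mul,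
      Matrix.mul_one, hR, ← Matrix.mul_assoc, mul_nonsing_inv R hRunit, Matrix.one_mul]
    rw [Matrix.mul_assoc, nonsing_inv_mul R hRunit, Matrix.mul_one]
  refine ⟨h₁.1.eigenvalues, h₁.1.eigenvalues * hA.1.eigenvalues, h₁.eigenvalues_pos,
    fun i => mul_pos (h₁.eigenvalues_pos i) (hA.eigenvalues_pos i), fun x y => ?_⟩
  rw [hsplit, det_mul, det_mul, mul_right_comm, hRdet, hA.1.det_smul_one_add_smul,
    h₁.1.det_eq_prod_eigenvalues, ← Finset.prod_mul_distrib]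
  refine Finset.prod_congr rfl fun i _ => ?_
  simp only [Pi.mul_apply, RCLike.ofReal_real_eq_id, id]
  ring

theorem convexOn_comp_det_iff_convexOn_comp_prod {f : ℝ → ℝ} :
    ConvexOn ℝ {C : Matrix ι ι ℝ | C.PosDef} (fun C => f C.det) ↔
      ConvexOn ℝ {x : ι → ℝ | ∀ i, 0 < x i} (fun x => f (∏ i, x i)) := by
  refine ⟨fun h => ?_, fun h => ⟨convex_setOf_posDef, fun C₁ h₁ C₂ h₂ a b ha hb hab => ?_⟩⟩
  · have hpre : diagonalLinearMap ι ℝ ℝ ⁻¹' {C | C.PosDef} = {x | ∀ i, 0 < x i} :=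
      ext fun _ => posDef_diagonal_iff
    refine (hpre ▸ h.comp_linearMap (diagonalLinearMap ι ℝ ℝ)).congr fun x _ => ?_
    simp
  · obtain ⟨α, β, hα, hβ, hdet⟩ := h₁.exists_det_smul_add_smul_eq_prod h₂
    have h' := h.2 (x := α) (y := β) hα hβ ha hb hab
    have h0 := hdet 1 0
    have h1 := hdet 0 1
    simp only [one_smul, zero_smul, add_zero, zero_add, one_mul, zero_mul] at h0 h1
    simp only [smul_eq_mul, Pi.add_apply, Pi.smul_apply] at h' ⊢
    rwa [hdet, h0, h1]

end

theorem convexOn_f_det_iff (n : ℕ) (hn : 2 ≤ n) (f : ℝ → ℝ)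
    (hf : ContDiffOn ℝ 2 f (Set.Ioi 0)) :
    ConvexOn ℝ {C : Matrix (Fin n) (Fin n) ℝ | C.PosDef} (fun C => f C.det) ↔
      ∀ s : ℝ, 0 < s →
        0 ≤ deriv (deriv f) s + ((n : ℝ) - 1) / ((n : ℝ) * s) * deriv f s ∧
        deriv f s ≤ 0 := by
  have : Nonempty (Fin n) := ⟨⟨0, by omega⟩⟩
  have hanti := antitoneOn_Ioi_iff_deriv_nonpos (hf.differentiableOn two_ne_zero)
  have hpow := convexOn_comp_pow_iff (by omega : n ≠ 0) hf
  rw [convexOn_comp_det_iff_convexOn_comp_prod]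
  constructor
  · intro hF s hs
    have hij : (⟨0, by omega⟩ : Fin n) ≠ ⟨1, by omega⟩ := by simp
    exact ⟨hpow.1 (Fintype.card_fin n ▸ hF.comp_pow_card_of_comp_prod) s hs,
      hanti.1 (antitoneOn_of_convexOn_comp_prod hij hF) s hs⟩
  · intro h
    refine ConvexOn.comp_prod_of_antitoneOn ?_ (hanti.2 fun s hs => (h s hs).2)
    rw [Fintype.card_fin]
    exact hpow.2 fun s hs => (h s hs).1
end

section
/- Let f ∈ C²(ℝ₊,ℝ) and define g(C) = f(det C) on the set PSym(n) of real symmetric positive definite n×n matrices. Then for every C ∈ PSym(n) and every symmetric matrix H, the second Fréchet derivative satisfies D²g(C).(H,H) = det(C)·{ [f''(det C)·det(C) + f'(det C)]·⟨C⁻¹,H⟩² − f'(det C)·⟨HC⁻¹, C⁻¹H⟩ }. -/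
open Matrix

attribute [local instance] Matrix.frobeniusNormedAddCommGroup Matrix.frobeniusNormedSpace

/-- The trace inner product `⟨A, B⟩ = tr (A Bᵀ)` on real `n × n` matrices. -/
noncomputable def tinner {n : ℕ} (A B : Matrix (Fin n) (Fin n) ℝ) : ℝ :=
  (A * Bᵀ).trace

/-!
Jacobi's formula `D det(X) H = tr (adj X * H)` (the derivative of the row-multilinear map `det`)
gives `D g(X) H = f'(det X) det X tr (X⁻¹ H)` on the open set `det X ≠ 0`. Differentiating this
once more, by the product rule together with `D(X ↦ X⁻¹)(C) H = -C⁻¹ H C⁻¹`, yields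
`det C ((f''(det C) det C + f'(det C)) tr (C⁻¹ H)² - f'(det C) tr (C⁻¹ H C⁻¹ H))`, and the
symmetry of `C` and `H` turns these traces into the trace inner products of the statement.
-/

open Filter Topology

section

variable {m : Type*} [Fintype m] [DecidableEq m]

/- The Frobenius norm induces the product topology, but not reducibly; without this instance the
type `Matrix m m ℝ →L[ℝ] ℝ` would not carry its operator norm. -/
noncomputable local instance : TopologicalSpace (Matrix m m ℝ) :=
  (frobeniusNormedAddCommGroup : NormedAddCommGroup (Matrix m m ℝ)).toUniformSpace.toTopologicalSpace

noncomputable def traceMulCLM : Matrix m m ℝ →L[ℝ] Matrix m m ℝ →L[ℝ] ℝ :=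
  LinearMap.toContinuousLinearMap <|
    LinearMap.toContinuousLinearMap.toLinearMap ∘ₗ (LinearMap.mul ℝ _).compr₂ (traceLinearMap m ℝ ℝ)

@[simp]
theorem traceMulCLM_apply (A H : Matrix m m ℝ) : traceMulCLM A H = (A * H).trace :=
  rfl

noncomputable def detRowContinuousMultilinear : ContinuousMultilinearMap ℝ (fun _ : m => m → ℝ) ℝ :=
  { (detRowAlternating : (m → ℝ) [⋀^m]→ₗ[ℝ] ℝ).toMultilinearMap with
    cont := (continuous_id.matrix_det : Continuous fun X : Matrix m m ℝ => X.det) }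

theorem Matrix.sum_det_updateRow_eq_trace_adjugate_mul {R : Type*} [CommRing R]
    (X H : Matrix m m R) : ∑ i, (X.updateRow i (H i)).det = (X.adjugate * H).trace := by
  have row : ∀ i, (X.updateRow i (H i)).det = ∑ j, X.adjugate j i * H i j := by
    intro i
    rw [← det_transpose, ← updateCol_transpose, ← cramer_apply, cramer_eq_adjugate_mulVec]
    simp [mulVec, dotProduct, ← adjugate_transpose, mul_comm]
  simp only [row, trace, diag, mul_apply]
  exact Finset.sum_comm

theorem Matrix.hasFDerivAt_det (X : Matrix m m ℝ) :
    HasFDerivAt (fun Y : Matrix m m ℝ => Y.det) (traceMulCLM X.adjugate) X := by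
  have hderiv : (detRowContinuousMultilinear.linearDeriv X : Matrix m m ℝ →L[ℝ] ℝ) =
      traceMulCLM X.adjugate :=
    ContinuousLinearMap.ext fun H => (ContinuousMultilinearMap.linearDeriv_apply _ _ _).trans
      (X.sum_det_updateRow_eq_trace_adjugate_mul H)
  have h : HasFDerivAt (fun Y : Matrix m m ℝ => Y.det)
      (detRowContinuousMultilinear.linearDeriv X) X := by
    exact detRowContinuousMultilinear.hasFDerivAt X
  exact hderiv ▸ h

theorem Matrix.adjugate_eq_det_smul_inv {X : Matrix m m ℝ} (hX : X.det ≠ 0) :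
    X.adjugate = X.det • X⁻¹ := by
  rw [inv_def, Ring.inverse_eq_inv', smul_smul, mul_inv_cancel₀ hX, one_smul]

theorem Matrix.hasFDerivAt_inv {X : Matrix m m ℝ} (hX : X.det ≠ 0) :
    HasFDerivAt (fun Y : Matrix m m ℝ => Y⁻¹)
      (-LinearMap.toContinuousLinearMap (LinearMap.mulLeftRight ℝ (X⁻¹, X⁻¹))) X := by
  let := frobeniusNormedRing (m := m) (α := ℝ)
  let := frobeniusNormedAlgebra (m := m) (R := ℝ) (α := ℝ)
  have hX' : IsUnit X := (X.isUnit_iff_isUnit_det).2 (isUnit_iff_ne_zero.2 hX)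
  have h := hasFDerivAt_ringInverse (𝕜 := ℝ) hX'.unit
  rwa [IsUnit.unit_spec, coe_units_inv, IsUnit.unit_spec,
    ← funext nonsing_inv_eq_ringInverse] at h

theorem HasDerivAt.hasFDerivAt_comp_det {f : ℝ → ℝ} {f' : ℝ} {X : Matrix m m ℝ}
    (hf : HasDerivAt f f' X.det) (hX : X.det ≠ 0) :
    HasFDerivAt (fun Y : Matrix m m ℝ => f Y.det) ((f' * X.det) • traceMulCLM X⁻¹) X := by
  rw [mul_smul, ← map_smul, ← adjugate_eq_det_smul_inv hX]
  exact hf.comp_hasFDerivAt X X.hasFDerivAt_det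

theorem fderiv_fderiv_comp_det_apply {f : ℝ → ℝ} {C : Matrix m m ℝ} (hC : C.det ≠ 0)
    (hf : ∀ᶠ x in 𝓝 C.det, DifferentiableAt ℝ f x) (hf' : DifferentiableAt ℝ (deriv f) C.det)
    (H : Matrix m m ℝ) :
    fderiv ℝ (fderiv ℝ (fun X : Matrix m m ℝ => f X.det)) C H H =
      C.det * ((deriv (deriv f) C.det * C.det + deriv f C.det) * (C⁻¹ * H).trace ^ 2
        - deriv f C.det * (C⁻¹ * H * (C⁻¹ * H)).trace) := by
  have hdet : Tendsto (fun X : Matrix m m ℝ => X.det) (𝓝 C) (𝓝 C.det) :=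
    C.hasFDerivAt_det.continuousAt
  have hfirst : fderiv ℝ (fun X : Matrix m m ℝ => f X.det) =ᶠ[𝓝 C]
      fun X => (deriv f X.det * X.det) • traceMulCLM X⁻¹ := by
    filter_upwards [hdet.eventually hf, hdet.eventually (isOpen_ne.mem_nhds hC)] with X hfX hX
    exact (hfX.hasDerivAt.hasFDerivAt_comp_det hX).fderiv
  have hscalar := (hf'.hasDerivAt.comp_hasFDerivAt C C.hasFDerivAt_det).mul C.hasFDerivAt_det
  have hsecond :
      HasFDerivAt (fun X : Matrix m m ℝ => (deriv f X.det * X.det) • traceMulCLM X⁻¹) _ C :=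
    hscalar.smul (traceMulCLM.hasFDerivAt.comp C (hasFDerivAt_inv hC))
  rw [hfirst.fderiv_eq, hsecond.fderiv]
  simp [adjugate_eq_det_smul_inv hC, Matrix.mul_assoc]
  ring

end

theorem tinner_eq_trace_mul {n : ℕ} (A : Matrix (Fin n) (Fin n) ℝ) {B : Matrix (Fin n) (Fin n) ℝ}
    (hB : B.IsSymm) : tinner A B = (A * B).trace := by
  rw [tinner, hB.eq]

theorem tinner_mul_inv_inv_mul {n : ℕ} {C H : Matrix (Fin n) (Fin n) ℝ} (hC : C.IsSymm)
    (hH : H.IsSymm) : tinner (H * C⁻¹) (C⁻¹ * H) = (C⁻¹ * H * (C⁻¹ * H)).trace := by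
  rw [tinner, transpose_mul, hH.eq, transpose_nonsing_inv, hC.eq, ← Matrix.mul_assoc,
    trace_mul_comm, Matrix.mul_assoc, Matrix.mul_assoc]

theorem second_fderiv_f_det (n : ℕ) (f : ℝ → ℝ) (hf : ContDiffOn ℝ 2 f (Set.Ioi 0))
    (C H : Matrix (Fin n) (Fin n) ℝ) (hC : C.PosDef) (hH : H.IsSymm) :
    iteratedFDeriv ℝ 2 (fun X : Matrix (Fin n) (Fin n) ℝ => f X.det) C ![H, H] =
      C.det * ((deriv (deriv f) C.det * C.det + deriv f C.det) * (tinner C⁻¹ H) ^ 2 -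
        deriv f C.det * tinner (H * C⁻¹) (C⁻¹ * H)) := by
  have hdet : Set.Ioi (0 : ℝ) ∈ 𝓝 C.det := Ioi_mem_nhds hC.det_pos
  have hf₁ : ∀ᶠ x in 𝓝 C.det, DifferentiableAt ℝ f x :=
    eventually_of_mem hdet fun x hx =>
      (hf.differentiableOn two_ne_zero x hx).differentiableAt (Ioi_mem_nhds hx)
  have hf₂ : DifferentiableAt ℝ (deriv f) C.det :=
    ((hf.deriv_of_isOpen (m := 1) isOpen_Ioi (by norm_num)).differentiableOn one_ne_zero
      C.det hC.det_pos).differentiableAt hdet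
  rw [iteratedFDeriv_two_apply, tinner_eq_trace_mul _ hH,
    tinner_mul_inv_inv_mul (isHermitian_iff_isSymm.1 hC.isHermitian) hH]
  exact fderiv_fderiv_comp_det_apply hC.det_pos.ne' hf₁ hf₂ H
end

section
/- Let n ≥ 2 and f ∈ C²(ℝ₊,ℝ). If for all real symmetric positive definite n×n matrices C and all symmetric n×n matrices H the inequality [f''(det C)·det(C) + f'(det C)]·⟨C⁻¹,H⟩² − f'(det C)·⟨HC⁻¹, C⁻¹H⟩ ≥ 0 holds, then f'(s) ≤ 0 for all s > 0. -/
/-!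
Test the condition at the scalar matrix `C = s^(1/n) • 1`, whose determinant is `s`, against a
nonzero symmetric `H` of trace zero (it exists because `n ≥ 2`). Then `⟨C⁻¹, H⟩ = s^(-1/n) tr H`
vanishes, so the term carrying `f''` drops out, and the condition reduces to
`-f'(s) s^(-2/n) ⟨H, H⟩ ≥ 0` with `⟨H, H⟩ > 0`.
-/

open Matrix

theorem tinner_self_pos {n : ℕ} {H : Matrix (Fin n) (Fin n) ℝ} (hH : H ≠ 0) :
    0 < tinner H H := by
  have hnonneg := (posSemidef_self_mul_conjTranspose H).trace_nonneg
  have hne := (trace_mul_conjTranspose_self_eq_zero_iff (A := H)).not.mpr hH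
  rw [conjTranspose_eq_transpose_of_trivial] at hnonneg hne
  exact hnonneg.lt_of_ne' hne

theorem tinner_smul_one_left {n : ℕ} (a : ℝ) (H : Matrix (Fin n) (Fin n) ℝ) :
    tinner (a • 1) H = a * H.trace := by
  rw [tinner, smul_mul_assoc, one_mul, trace_smul, trace_transpose, smul_eq_mul]

theorem tinner_mul_smul_one_smul_one_mul {n : ℕ} (a : ℝ) {H : Matrix (Fin n) (Fin n) ℝ}
    (hH : H.IsSymm) : tinner (H * (a • 1)) ((a • 1) * H) = a ^ 2 * tinner H H := by
  rw [mul_smul_one, smul_one_mul, tinner, tinner, transpose_smul, hH.eq, smul_mul_smul_comm,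
    trace_smul, smul_eq_mul, sq]

theorem exists_isSymm_trace_eq_zero_ne_zero {ι R : Type*} [Fintype ι] [DecidableEq ι] [Ring R]
    [Nontrivial R] {i j : ι} (hij : i ≠ j) :
    ∃ H : Matrix ι ι R, H.IsSymm ∧ H.trace = 0 ∧ H ≠ 0 := by
  refine ⟨diagonal (Pi.single i 1 - Pi.single j 1), isSymm_diagonal _, ?_, ?_⟩
  · simp [trace_diagonal, Finset.sum_sub_distrib]
  · intro hzero
    have hii := congrFun (congrFun hzero i) i
    simp [hij] at hii

theorem inv_smul_one {ι K : Type*} [Fintype ι] [DecidableEq ι] [Field K] {c : K} (hc : c ≠ 0) :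
    (c • 1 : Matrix ι ι K)⁻¹ = c⁻¹ • 1 :=
  inv_eq_right_inv (by rw [smul_mul_smul_comm, mul_one, mul_inv_cancel₀ hc, one_smul])

theorem det_rpow_inv_smul_one {n : ℕ} (hn : n ≠ 0) {s : ℝ} (hs : 0 ≤ s) :
    (s ^ (n : ℝ)⁻¹ • 1 : Matrix (Fin n) (Fin n) ℝ).det = s := by
  rw [det_smul, det_one, mul_one, Fintype.card_fin, Real.rpow_inv_natCast_pow hs hn]

theorem deriv_nonpos_of_cond_general (n : ℕ) (hn : 2 ≤ n) (f : ℝ → ℝ)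
    (h : ∀ C : Matrix (Fin n) (Fin n) ℝ, C.PosDef →
        ∀ H : Matrix (Fin n) (Fin n) ℝ, H.IsSymm →
          0 ≤ (deriv (deriv f) C.det * C.det + deriv f C.det) * (tinner C⁻¹ H) ^ 2 -
              deriv f C.det * tinner (H * C⁻¹) (C⁻¹ * H)) :
    ∀ s : ℝ, 0 < s → deriv f s ≤ 0 := by
  intro s hs
  obtain ⟨H, hH, hHtr, hH0⟩ := exists_isSymm_trace_eq_zero_ne_zero (R := ℝ)
    (i := (⟨0, by omega⟩ : Fin n)) (j := ⟨1, by omega⟩) (by simp [Fin.ext_iff])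
  have hc : 0 < s ^ (n : ℝ)⁻¹ := Real.rpow_pos_of_pos hs _
  have key := h _ (PosDef.one.smul hc) H hH
  rw [det_rpow_inv_smul_one (by omega) hs.le, inv_smul_one hc.ne', tinner_smul_one_left, hHtr,
    tinner_mul_smul_one_smul_one_mul _ hH] at key
  simp only [mul_zero, ne_eq, OfNat.ofNat_ne_zero, not_false_eq_true, zero_pow, zero_sub,
    neg_nonneg] at key
  have hpos : 0 < (s ^ (n : ℝ)⁻¹)⁻¹ ^ 2 * tinner H H := by
    have := tinner_self_pos hH0
    positivity
  exact nonpos_of_mul_nonpos_left key hpos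

theorem deriv_nonpos_of_cond (n : ℕ) (hn : 2 ≤ n) (f : ℝ → ℝ)
    (hf : ContDiffOn ℝ 2 f (Set.Ioi 0))
    (h : ∀ C : Matrix (Fin n) (Fin n) ℝ, C.PosDef →
        ∀ H : Matrix (Fin n) (Fin n) ℝ, H.IsSymm →
          0 ≤ (deriv (deriv f) C.det * C.det + deriv f C.det) * (tinner C⁻¹ H) ^ 2 -
              deriv f C.det * tinner (H * C⁻¹) (C⁻¹ * H)) :
    ∀ s : ℝ, 0 < s → deriv f s ≤ 0 :=
  deriv_nonpos_of_cond_general n hn f h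
end

section
/- Let f ∈ C²(ℝ₊,ℝ). The following are equivalent: (i) for all real symmetric positive definite n×n matrices C and all symmetric n×n matrices H, [f''(det C)·det(C) + f'(det C)]·⟨C⁻¹,H⟩² − f'(det C)·⟨HC⁻¹, C⁻¹H⟩ ≥ 0; (ii) for all symmetric n×n matrices H and all diagonal matrices D⁻¹ = diag(d₁,...,dₙ) with d₁,...,dₙ > 0, writing s := (d₁·…·dₙ)⁻¹, the inequality (f''(s) + f'(s)/s)·⟨D⁻¹,H⟩² − (f'(s)/s)·⟨D⁻¹H, HD⁻¹⟩ ≥ 0 holds. -/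
open Matrix

lemma tinner_comm {n : ℕ} (A B : Matrix (Fin n) (Fin n) ℝ) : tinner A B = tinner B A := by
  unfold tinner
  rw [← Matrix.trace_transpose, Matrix.transpose_mul, Matrix.transpose_transpose]

lemma conj_mul_conj {n : ℕ} (U A B : Matrix (Fin n) (Fin n) ℝ) (hU : U * Uᵀ = 1) :
    (Uᵀ * A * U) * (Uᵀ * B * U) = Uᵀ * (A * B) * U := by
  rw [mul_assoc (Uᵀ * A) U, ← mul_assoc U (Uᵀ * B) U, ← mul_assoc U Uᵀ B, hU, one_mul,
    ← mul_assoc, mul_assoc Uᵀ A B]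

lemma tinner_conj {n : ℕ} (U A B : Matrix (Fin n) (Fin n) ℝ) (hU : U * Uᵀ = 1) :
    tinner (Uᵀ * A * U) (Uᵀ * B * U) = tinner A B := by
  unfold tinner
  have ht : (Uᵀ * B * U)ᵀ = Uᵀ * Bᵀ * U := by
    rw [Matrix.transpose_mul, Matrix.transpose_mul, Matrix.transpose_transpose, mul_assoc]
  rw [ht, conj_mul_conj _ _ _ hU, Matrix.trace_mul_comm, ← mul_assoc, hU, one_mul]

lemma scalar_iff (a b q t s : ℝ) (hs : 0 < s) :
    0 ≤ (a * s + b) * t ^ 2 - b * q ↔ 0 ≤ (a + b / s) * t ^ 2 - b / s * q := by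
  have key : ((a + b / s) * t ^ 2 - b / s * q) * s = (a * s + b) * t ^ 2 - b * q := by
    field_simp
  rw [← key, mul_nonneg_iff_of_pos_right hs]

theorem cond_iff_diagonal_cond (n : ℕ) (f : ℝ → ℝ)
    (hf : ContDiffOn ℝ 2 f (Set.Ioi 0)) :
    (∀ C : Matrix (Fin n) (Fin n) ℝ, C.PosDef →
        ∀ H : Matrix (Fin n) (Fin n) ℝ, H.IsSymm →
          0 ≤ (deriv (deriv f) C.det * C.det + deriv f C.det) * (tinner C⁻¹ H) ^ 2 -
              deriv f C.det * tinner (H * C⁻¹) (C⁻¹ * H)) ↔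
    (∀ H : Matrix (Fin n) (Fin n) ℝ, H.IsSymm →
        ∀ d : Fin n → ℝ, (∀ i, 0 < d i) →
          0 ≤ (deriv (deriv f) (∏ i, d i)⁻¹ +
                  deriv f (∏ i, d i)⁻¹ / (∏ i, d i)⁻¹) * (tinner (diagonal d) H) ^ 2 -
              deriv f (∏ i, d i)⁻¹ / (∏ i, d i)⁻¹ *
                tinner (diagonal d * H) (H * diagonal d)) := by
  constructor
  · intro h H hH d hd
    have hCpd : Matrix.PosDef (Matrix.diagonal fun i => (d i)⁻¹) :=
      Matrix.posDef_diagonal_iff.mpr fun i => inv_pos.mpr (hd i)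
    have hdet : (Matrix.diagonal fun i => (d i)⁻¹).det = (∏ i, d i)⁻¹ := by
      rw [Matrix.det_diagonal, Finset.prod_inv_distrib]
    have hinv : (Matrix.diagonal fun i => (d i)⁻¹)⁻¹ = Matrix.diagonal d := by
      apply Matrix.inv_eq_right_inv
      rw [Matrix.diagonal_mul_diagonal]
      convert Matrix.diagonal_one using 2
      exact funext fun i => inv_mul_cancel₀ (hd i).ne'
    have key := h _ hCpd H hH
    rw [hdet, hinv] at key
    have hs : (0:ℝ) < (∏ i, d i)⁻¹ :=
      inv_pos.mpr (Finset.prod_pos fun i _ => hd i)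
    rw [tinner_comm (diagonal d * H)]
    exact (scalar_iff _ _ _ _ _ hs).mp key
  · intro h C hC H hH
    have hherm : C.IsHermitian := hC.isHermitian
    set U : Matrix (Fin n) (Fin n) ℝ := (hherm.eigenvectorUnitary : Matrix (Fin n) (Fin n) ℝ)
      with hUdef
    have hstar : star U = Uᵀ := by
      rw [Matrix.star_eq_conjTranspose, Matrix.conjTranspose_eq_transpose_of_trivial]
    have hU1 : U * Uᵀ = 1 := by
      rw [← hstar]; exact (Matrix.mem_unitaryGroup_iff).mp hherm.eigenvectorUnitary.2
    have hU2 : Uᵀ * U = 1 := by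
      rw [← hstar]; exact (Matrix.mem_unitaryGroup_iff').mp hherm.eigenvectorUnitary.2
    set lam : Fin n → ℝ := hherm.eigenvalues with hlam
    have hCform : C = U * Matrix.diagonal lam * Uᵀ := by
      rw [← hstar]
      have := hherm.spectral_theorem
      simpa [RCLike.ofReal_real_eq_id] using this
    set d : Fin n → ℝ := fun i => (lam i)⁻¹ with hd
    have hdpos : ∀ i, 0 < d i := fun i => inv_pos.mpr (hC.eigenvalues_pos i)
    have hdiaginv : (Matrix.diagonal lam)⁻¹ = Matrix.diagonal d := by
      apply Matrix.inv_eq_right_inv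
      rw [Matrix.diagonal_mul_diagonal]
      convert Matrix.diagonal_one using 2
      exact funext fun i => mul_inv_cancel₀ (hC.eigenvalues_pos i).ne'
    have hCinv : C⁻¹ = U * Matrix.diagonal d * Uᵀ := by
      rw [hCform, Matrix.mul_inv_rev, Matrix.mul_inv_rev, hdiaginv,
        Matrix.inv_eq_right_inv hU1, Matrix.inv_eq_right_inv hU2, ← mul_assoc]
    have hdiag : Matrix.diagonal d = Uᵀ * C⁻¹ * U := by
      rw [hCinv, ← mul_assoc, ← mul_assoc, hU2, one_mul, mul_assoc, hU2, mul_one]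
    have hdetd : (∏ i, d i)⁻¹ = C.det := by
      have hdet : C.det = ∏ i, lam i := by
        simpa [RCLike.ofReal_real_eq_id] using hherm.det_eq_prod_eigenvalues
      rw [hdet, hd]
      rw [Finset.prod_inv_distrib, inv_inv]
    set H' : Matrix (Fin n) (Fin n) ℝ := Uᵀ * H * U with hH'def
    have hH' : H'.IsSymm := by
      rw [Matrix.IsSymm, hH'def, Matrix.transpose_mul, Matrix.transpose_mul,
        Matrix.transpose_transpose, hH.eq, mul_assoc]
    have key := h H' hH' d hdpos
    rw [hdetd] at key
    have e1 : tinner (Matrix.diagonal d) H' = tinner C⁻¹ H := by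
      rw [hdiag, hH'def, tinner_conj _ _ _ hU1]
    have e2 : tinner (Matrix.diagonal d * H') (H' * Matrix.diagonal d) =
        tinner (H * C⁻¹) (C⁻¹ * H) := by
      rw [hdiag, hH'def, conj_mul_conj _ _ _ hU1, conj_mul_conj _ _ _ hU1,
        tinner_conj _ _ _ hU1, tinner_comm]
    rw [e1, e2] at key
    exact (scalar_iff _ _ _ _ _ hC.det_pos).mpr key
end

section
/- Let f ∈ C²(ℝ₊,ℝ) satisfy f''(s) + ((n−1)/(n·s))·f'(s) ≥ 0 and f'(s) ≤ 0 for all s > 0. Then the function C ↦ f(det C) is convex on the set PSym(n) of real symmetric positive definite n×n matrices. -/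
/-!
Write `f (det C) = φ (det C ^ (1/n))` with `φ t = f (t ^ n)`. The differential inequality says
exactly that `φ'' ≥ 0`, and `f' ≤ 0` makes `φ` antitone, on `(0, ∞)`. By Minkowski's determinant
inequality `det (A + B) ^ (1/n) ≥ det A ^ (1/n) + det B ^ (1/n)`, the map `C ↦ det C ^ (1/n)` is
concave on positive definite matrices, and a convex antitone function of a concave function is
convex. Minkowski's inequality reduces, after the congruence `A + B = S (1 + C) S` with `S² = A`,
to the superadditivity `1 + (∏ μᵢ) ^ (1/n) ≤ (∏ (1 + μᵢ)) ^ (1/n)` of the geometric mean, applied to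
the eigenvalues `μᵢ ≥ 0` of `C`.
-/

open Matrix Finset Set

theorem Real.one_add_prod_rpow_le_prod_one_add_rpow {ι : Type*} (s : Finset ι) (w μ : ι → ℝ)
    (hw : ∀ i ∈ s, 0 ≤ w i) (hw' : ∑ i ∈ s, w i = 1) (hμ : ∀ i ∈ s, 0 ≤ μ i) :
    1 + ∏ i ∈ s, μ i ^ w i ≤ ∏ i ∈ s, (1 + μ i) ^ w i := by
  have hpos : ∀ i ∈ s, 0 < 1 + μ i := fun i hi => by linarith [hμ i hi]
  -- AM-GM for the families `1 / (1 + μ i)` and `μ i / (1 + μ i)`, which add up to `1`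
  have hsum : ∏ i ∈ s, (1 / (1 + μ i)) ^ w i + ∏ i ∈ s, (μ i / (1 + μ i)) ^ w i ≤ 1 := calc
    _ ≤ ∑ i ∈ s, w i * (1 / (1 + μ i)) + ∑ i ∈ s, w i * (μ i / (1 + μ i)) := add_le_add
        (geom_mean_le_arith_mean_weighted s w _ hw hw' fun i hi => (one_div_pos.2 (hpos i hi)).le)
        (geom_mean_le_arith_mean_weighted s w _ hw hw' fun i hi =>
          div_nonneg (hμ i hi) (hpos i hi).le)
    _ = ∑ i ∈ s, w i := by
        rw [← sum_add_distrib]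
        refine sum_congr rfl fun i hi => ?_
        field_simp [(hpos i hi).ne']
    _ = 1 := hw'
  have hmul : ∀ z : ι → ℝ, (∀ i ∈ s, 0 ≤ z i) →
      (∏ i ∈ s, (z i / (1 + μ i)) ^ w i) * ∏ i ∈ s, (1 + μ i) ^ w i = ∏ i ∈ s, z i ^ w i := by
    intro z hz
    rw [← prod_mul_distrib]
    refine prod_congr rfl fun i hi => ?_
    rw [← mul_rpow (div_nonneg (hz i hi) (hpos i hi).le) (hpos i hi).le,
      div_mul_cancel₀ _ (hpos i hi).ne']
  calc 1 + ∏ i ∈ s, μ i ^ w i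
      = (∏ i ∈ s, (1 / (1 + μ i)) ^ w i + ∏ i ∈ s, (μ i / (1 + μ i)) ^ w i)
          * ∏ i ∈ s, (1 + μ i) ^ w i := by
        rw [add_mul, hmul _ fun _ _ => zero_le_one, hmul μ hμ]
        simp
    _ ≤ ∏ i ∈ s, (1 + μ i) ^ w i :=
        mul_le_of_le_one_left (prod_nonneg fun i hi => rpow_nonneg (hpos i hi).le _) hsum

theorem ConvexOn.comp_concaveOn_of_mapsTo {𝕜 E β γ : Type*} [Semiring 𝕜] [PartialOrder 𝕜]
    [AddCommMonoid E] [AddCommMonoid β] [AddCommMonoid γ] [PartialOrder β] [PartialOrder γ]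
    [SMul 𝕜 E] [Module 𝕜 β] [SMul 𝕜 γ] {s : Set E} {t : Set β} {f : E → β} {g : β → γ}
    (hg : ConvexOn 𝕜 t g) (hf : ConcaveOn 𝕜 s f) (hg' : AntitoneOn g t) (hst : MapsTo f s t) :
    ConvexOn 𝕜 s (g ∘ f) :=
  ⟨hf.1, fun _ hx _ hy _ _ ha hb hab =>
    (hg' (hg.1 (hst hx) (hst hy) ha hb hab) (hst (hf.1 hx hy ha hb hab))
      (hf.2 hx hy ha hb hab)).trans (hg.2 (hst hx) (hst hy) ha hb hab)⟩

theorem convexOn_Ioi_comp_pow {f : ℝ → ℝ} (n : ℕ) (hf : ContDiffOn ℝ 2 f (Ioi 0))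
    (h : ∀ s : ℝ, 0 < s → 0 ≤ deriv (deriv f) s + ((n : ℝ) - 1) / ((n : ℝ) * s) * deriv f s) :
    ConvexOn ℝ (Ioi 0) (fun t => f (t ^ n)) := by
  have hf' : ∀ s ∈ Ioi (0 : ℝ), HasDerivAt f (deriv f s) s := fun s hs =>
    ((hf.differentiableOn (by norm_num) s hs).differentiableAt (Ioi_mem_nhds hs)).hasDerivAt
  have hf'' : ∀ s ∈ Ioi (0 : ℝ), HasDerivAt (deriv f) (deriv (deriv f) s) s := fun s hs =>
    (((hf.deriv_of_isOpen (m := 1) isOpen_Ioi (by norm_num)).differentiableOn (by norm_num) s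
      hs).differentiableAt (Ioi_mem_nhds hs)).hasDerivAt
  have hpow : MapsTo (· ^ n) (Ioi (0 : ℝ)) (Ioi 0) := fun t ht => mem_Ioi.2 (pow_pos ht n)
  -- `(t ^ n)'' = ((t ^ n)') ^ 2 * (n - 1) / (n * t ^ n)`, which turns `φ''` into the hypothesis
  have hpow'' : ∀ t : ℝ, 0 < t → (n : ℝ) * ((n - 1 : ℕ) * t ^ (n - 1 - 1))
      = (n * t ^ (n - 1)) ^ 2 * (((n : ℝ) - 1) / (n * t ^ n)) := by
    intro t ht
    rcases n with _ | _ | k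
    · simp
    · simp
    · simp only [Nat.add_sub_cancel, Nat.cast_add, Nat.cast_one]
      field_simp
      ring
  refine convexOn_of_hasDerivWithinAt2_nonneg (convex_Ioi 0)
    (hf.continuousOn.comp (continuous_pow n).continuousOn hpow)
    (f' := fun t => deriv f (t ^ n) * (n * t ^ (n - 1)))
    (f'' := fun t => deriv (deriv f) (t ^ n) * (n * t ^ (n - 1)) * (n * t ^ (n - 1))
      + deriv f (t ^ n) * (n * ((n - 1 : ℕ) * t ^ (n - 1 - 1)))) ?_ ?_ ?_ <;> rw [interior_Ioi]
  · exact fun t ht => ((hf' _ (hpow ht)).comp t (hasDerivAt_pow n t)).hasDerivWithinAt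
  · exact fun t ht => (((hf'' _ (hpow ht)).comp t (hasDerivAt_pow n t)).mul
      ((hasDerivAt_pow (n - 1) t).const_mul (n : ℝ))).hasDerivWithinAt
  · intro t ht
    rw [hpow'' t ht]
    exact (mul_nonneg (sq_nonneg ((n : ℝ) * t ^ (n - 1))) (h _ (hpow ht))).trans_eq (by ring)

theorem antitoneOn_Ioi_comp_pow {f : ℝ → ℝ} (n : ℕ) (hf : DifferentiableOn ℝ f (Ioi 0))
    (h : ∀ s : ℝ, 0 < s → deriv f s ≤ 0) : AntitoneOn (fun t => f (t ^ n)) (Ioi 0) := by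
  have hanti : AntitoneOn f (Ioi 0) := antitoneOn_of_deriv_nonpos (convex_Ioi 0) hf.continuousOn
    (by rwa [interior_Ioi]) (by rw [interior_Ioi]; exact h)
  exact hanti.comp_MonotoneOn (fun s hs t _ hst => pow_le_pow_left₀ hs.le hst n)
    fun t ht => mem_Ioi.2 (pow_pos ht n)

namespace Matrix

open scoped ComplexOrder in
theorem convex_setOf_posDef_s13 {ι 𝕜 : Type*} [Fintype ι] [RCLike 𝕜] :
    Convex ℝ {A : Matrix ι ι 𝕜 | A.PosDef} := by
  intro A hA B hB a b ha hb hab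
  rcases ha.eq_or_lt with rfl | ha
  · simpa [show b = 1 by linarith] using hB
  · exact (hA.smul ha).add_posSemidef (hB.posSemidef.smul hb)

variable {ι : Type*} [Fintype ι] [DecidableEq ι]

theorem IsHermitian.det_one_add {𝕜 : Type*} [RCLike 𝕜] {C : Matrix ι ι 𝕜} (hC : C.IsHermitian) :
    (1 + C).det = ∏ i, (1 + (hC.eigenvalues i : 𝕜)) := by
  have : 1 + C = cfc (fun x : ℝ => 1 + x) C := by
    rw [cfc_const_add .., cfc_id' ..]
    simp [Algebra.algebraMap_eq_smul_one]
  rw [this, hC.cfc_eq]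
  simp [IsHermitian.cfc, -Unitary.conjStarAlgAut_apply]

theorem PosSemidef.one_add_det_rpow_le [Nonempty ι] {C : Matrix ι ι ℝ} (hC : C.PosSemidef) :
    1 + C.det ^ (Fintype.card ι : ℝ)⁻¹ ≤ (1 + C).det ^ (Fintype.card ι : ℝ)⁻¹ := by
  have hμ : ∀ i ∈ Finset.univ, 0 ≤ hC.1.eigenvalues i := fun i _ => hC.eigenvalues_nonneg i
  rw [hC.1.det_one_add, hC.1.det_eq_prod_eigenvalues]
  simp only [RCLike.ofReal_real_eq_id, id]
  rw [← Real.finsetProd_rpow _ _ hμ, ← Real.finsetProd_rpow _ _ fun i hi => by linarith [hμ i hi]]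
  exact Real.one_add_prod_rpow_le_prod_one_add_rpow _ _ _ (fun _ _ => by positivity) (by simp) hμ

theorem PosDef.det_rpow_add_det_rpow_le [Nonempty ι] {A B : Matrix ι ι ℝ} (hA : A.PosDef)
    (hB : B.PosSemidef) :
    A.det ^ (Fintype.card ι : ℝ)⁻¹ + B.det ^ (Fintype.card ι : ℝ)⁻¹
      ≤ (A + B).det ^ (Fintype.card ι : ℝ)⁻¹ := by
  open scoped MatrixOrder in
  obtain ⟨S, hS, hSS⟩ : ∃ S : Matrix ι ι ℝ, S.IsHermitian ∧ S * S = A :=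
    ⟨CFC.sqrt A, (CFC.sqrt_nonneg A).posSemidef.1, CFC.sqrt_mul_sqrt_self A hA.posSemidef.nonneg⟩
  have hSdet : S.det * S.det = A.det := by rw [← det_mul, hSS]
  have hSunit : IsUnit S.det := isUnit_iff_ne_zero.2 fun h =>
    hA.det_pos.ne' (by simpa [h] using hSdet.symm)
  set C := S⁻¹ * B * S⁻¹
  have hC : C.PosSemidef := by
    have := hB.mul_mul_conjTranspose_same S⁻¹
    rwa [hS.inv.eq] at this
  have hB_eq : B = S * C * S := by
    simp only [C, ← Matrix.mul_assoc, mul_nonsing_inv _ hSunit, Matrix.one_mul]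
    rw [Matrix.mul_assoc, nonsing_inv_mul _ hSunit, Matrix.mul_one]
  have hdetB : B.det = A.det * C.det := by
    rw [hB_eq, det_mul, det_mul, ← hSdet]
    ring
  have hdetAB : (A + B).det = A.det * (1 + C).det := by
    have hAB : A + B = S * (1 + C) * S := by
      rw [← hSS, hB_eq, Matrix.mul_add, Matrix.add_mul, Matrix.mul_one]
    rw [hAB, det_mul, det_mul, ← hSdet]
    ring
  have hA0 := hA.det_pos.le
  calc A.det ^ (Fintype.card ι : ℝ)⁻¹ + B.det ^ (Fintype.card ι : ℝ)⁻¹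
      = A.det ^ (Fintype.card ι : ℝ)⁻¹ * (1 + C.det ^ (Fintype.card ι : ℝ)⁻¹) := by
        rw [hdetB, Real.mul_rpow hA0 hC.det_nonneg, mul_one_add]
    _ ≤ A.det ^ (Fintype.card ι : ℝ)⁻¹ * (1 + C).det ^ (Fintype.card ι : ℝ)⁻¹ := by
        gcongr
        exact hC.one_add_det_rpow_le
    _ = (A + B).det ^ (Fintype.card ι : ℝ)⁻¹ := by
        rw [hdetAB, Real.mul_rpow hA0 (PosSemidef.one.add hC).det_nonneg]

theorem det_smul_rpow_inv_card [Nonempty ι] {A : Matrix ι ι ℝ} (hA : 0 ≤ A.det) {c : ℝ}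
    (hc : 0 ≤ c) :
    (c • A).det ^ (Fintype.card ι : ℝ)⁻¹ = c * A.det ^ (Fintype.card ι : ℝ)⁻¹ := by
  rw [det_smul, Real.mul_rpow (by positivity) hA,
    Real.pow_rpow_inv_natCast hc Fintype.card_ne_zero]

theorem concaveOn_det_rpow_inv_card :
    ConcaveOn ℝ {A : Matrix ι ι ℝ | A.PosDef} (fun A => A.det ^ (Fintype.card ι : ℝ)⁻¹) := by
  cases isEmpty_or_nonempty ι
  · simpa [det_isEmpty] using concaveOn_const (1 : ℝ) convex_setOf_posDef_s13
  refine ⟨convex_setOf_posDef_s13, fun A hA B hB a b ha hb hab => ?_⟩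
  rcases ha.eq_or_lt with rfl | ha
  · simp [show b = 1 by linarith]
  calc a • A.det ^ (Fintype.card ι : ℝ)⁻¹ + b • B.det ^ (Fintype.card ι : ℝ)⁻¹
      = (a • A).det ^ (Fintype.card ι : ℝ)⁻¹ + (b • B).det ^ (Fintype.card ι : ℝ)⁻¹ := by
        rw [det_smul_rpow_inv_card hA.det_pos.le ha.le, det_smul_rpow_inv_card hB.det_pos.le hb,
          smul_eq_mul, smul_eq_mul]
    _ ≤ (a • A + b • B).det ^ (Fintype.card ι : ℝ)⁻¹ :=
        (hA.smul ha).det_rpow_add_det_rpow_le (hB.posSemidef.smul hb)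

end Matrix

theorem convexOn_f_det_of_diff_ineq (n : ℕ) (f : ℝ → ℝ)
    (hf : ContDiffOn ℝ 2 f (Set.Ioi 0))
    (h : ∀ s : ℝ, 0 < s →
        0 ≤ deriv (deriv f) s + ((n : ℝ) - 1) / ((n : ℝ) * s) * deriv f s ∧
        deriv f s ≤ 0) :
    ConvexOn ℝ {C : Matrix (Fin n) (Fin n) ℝ | C.PosDef} (fun C => f C.det) := by
  have hφ := convexOn_Ioi_comp_pow n hf fun s hs => (h s hs).1
  have hφ' := antitoneOn_Ioi_comp_pow n (hf.differentiableOn (by norm_num)) fun s hs => (h s hs).2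
  have hD := concaveOn_det_rpow_inv_card (ι := Fin n)
  rw [Fintype.card_fin] at hD
  refine (hφ.comp_concaveOn_of_mapsTo hD hφ' fun C hC => Real.rpow_pos_of_pos hC.det_pos _).congr
    fun C hC => ?_
  rcases n.eq_zero_or_pos with rfl | hn
  · simp
  · simp [Real.rpow_inv_natCast_pow hC.det_pos.le hn.ne']
end
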